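/- arXiv:1505.06514 — 3 statements merged into one kernel-verified Lean document; each statement's English description precedes it below -/
import Mathlib

section
/- Let 0 < ν < 1, let γ > −1, and let t > 0. Then the function s ↦ (1/Γ(1-ν)) · ∫_0^s (s-τ)^{-ν} · τ^γ dτ has derivative (Γ(γ+1)/Γ(γ+1-ν)) · t^{γ-ν} at the point t. (That is, the Riemann–Liouville fractional derivative of order ν with start point 0 of t^γ equals Γ(γ+1)/Γ(γ+1-ν) · t^{γ-ν}.) -/
/-! For `s > 0` the substitution `τ = s u` turns `∫₀ˢ (s - τ)^(-ν) τ^γ dτ` into `s^(γ+1-ν)` times the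
Beta integral `B(γ+1, 1-ν) = Γ(γ+1) Γ(1-ν) / Γ(γ+2-ν)`. Differentiating the power and using
`x / Γ(x+1) = 1 / Γ(x)` with `x = γ+1-ν` gives the claim. -/

open intervalIntegral Real

/-- Valid for every real `x`: at `x = 0, -1, -2, …` both sides are `0`, since Mathlib's `Γ` vanishes
at the poles and `0⁻¹ = 0`. -/
theorem Real.div_Gamma_add_one (x : ℝ) : x / Gamma (x + 1) = (Gamma x)⁻¹ := by
  rcases eq_or_ne x 0 with rfl | hx
  · simp
  · rw [Gamma_add_one hx, div_mul_cancel_left₀ hx]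

theorem integral_rpow_mul_sub_rpow_eq_beta {a b s : ℝ} (ha : 0 < a) (hb : 0 < b) (hs : 0 < s) :
    ∫ τ in (0:ℝ)..s, τ ^ (a - 1) * (s - τ) ^ (b - 1) =
      s ^ (a + b - 1) * ProbabilityTheory.beta a b := by
  apply Complex.ofReal_injective
  have hβ : (ProbabilityTheory.beta a b : ℂ) = Complex.betaIntegral a b := by
    rw [Complex.betaIntegral_eq_Gamma_mul_div _ _ (by simpa) (by simpa), ProbabilityTheory.beta]
    push_cast [← Complex.Gamma_ofReal]
    rfl
  rw [Complex.ofReal_mul, hβ, Complex.ofReal_cpow hs.le, ← intervalIntegral.integral_ofReal]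
  push_cast
  rw [← Complex.betaIntegral_scaled _ _ hs]
  refine intervalIntegral.integral_congr fun τ hτ => ?_
  rw [Set.uIcc_of_le hs.le] at hτ
  rw [Complex.ofReal_cpow hτ.1, Complex.ofReal_cpow (sub_nonneg.2 hτ.2)]
  push_cast
  rfl

theorem RL_deriv_of_power_general (ν γ t : ℝ) (hν1 : ν < 1) (hγ : -1 < γ) (ht : 0 < t) :
    HasDerivAt
      (fun s : ℝ => (1 / Real.Gamma (1 - ν)) * ∫ τ in (0:ℝ)..s, (s - τ) ^ (-ν) * τ ^ γ)
      (Real.Gamma (γ + 1) / Real.Gamma (γ + 1 - ν) * t ^ (γ - ν)) t := by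
  set B := ProbabilityTheory.beta (γ + 1) (1 - ν) with hB
  have hintegral : ∀ s > 0, ∫ τ in (0:ℝ)..s, (s - τ) ^ (-ν) * τ ^ γ = s ^ (γ + 1 - ν) * B := by
    intro s hs
    have h := integral_rpow_mul_sub_rpow_eq_beta (a := γ + 1) (b := 1 - ν)
      (by linarith) (by linarith) hs
    simp only [add_sub_cancel_right, sub_sub_cancel_left] at h
    simpa only [mul_comm, show γ + 1 + (1 - ν) - 1 = γ + 1 - ν by ring] using h
  have hpower := ((hasDerivAt_rpow_const (p := γ + 1 - ν) (Or.inl ht.ne')).mul_const B).const_mul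
    (1 / Gamma (1 - ν))
  refine (hpower.congr_of_eventuallyEq ?_).congr_deriv ?_
  · filter_upwards [Ioi_mem_nhds ht] with s hs
    rw [hintegral s hs]
  · have hΓ : Gamma (1 - ν) ≠ 0 := (Gamma_pos_of_pos (sub_pos.2 hν1)).ne'
    rw [show γ + 1 - ν - 1 = γ - ν by ring, hB, ProbabilityTheory.beta,
      show γ + 1 + (1 - ν) = γ + 1 - ν + 1 by ring, div_eq_mul_inv (Gamma (γ + 1)),
      ← div_Gamma_add_one]
    field_simp

/-- The Riemann–Liouville fractional derivative of order `ν ∈ (0,1)` with start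
point `0` of `t^γ` (for `γ > -1`) equals `Γ(γ+1)/Γ(γ+1-ν) * t^(γ-ν)`. -/
theorem RL_deriv_of_power (ν γ t : ℝ) (hν0 : 0 < ν) (hν1 : ν < 1) (hγ : -1 < γ) (ht : 0 < t) :
    HasDerivAt
      (fun s : ℝ => (1 / Real.Gamma (1 - ν)) * ∫ τ in (0:ℝ)..s, (s - τ) ^ (-ν) * τ ^ γ)
      (Real.Gamma (γ + 1) / Real.Gamma (γ + 1 - ν) * t ^ (γ - ν)) t :=
  RL_deriv_of_power_general ν γ t hν1 hγ ht
end

section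
/- Let 0 < α < 1, let a and A be real numbers, and let t > 0. Write E_α(x) = Σ_{n=0}^∞ x^n / Γ(1+nα) for the one-parameter Mittag-Leffler function, and set f(s) = A·E_α(a·s^α), so that f(0) = A. Then the function s ↦ (1/Γ(1-α)) · ∫_0^s (s-ξ)^{-α} · (f(ξ) − A) dξ has derivative a·A·E_α(a·t^α) at the point t. (That is, the Jumarie fractional derivative of order α of A·E_α(a t^α) equals a·A·E_α(a t^α), so A·E_α(a t^α) solves the fractional differential equation D^α y = a y.) -/
/-!
Write `I^γ f(s) = Γ(γ)⁻¹ ∫₀ˢ (s - ξ)^(γ-1) f(ξ) dξ` and `E_{α,β}(x) = Σ xⁿ / Γ(β + nα)`, so that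
`E_α = E_{α,1}`. The Beta integral gives `I^γ (ξ^(p-1)) = Γ(p) / Γ(p + γ) s^(p+γ-1)`; applied
termwise (the series converges absolutely, as `Γ(y + α) / Γ(y) → ∞`) it yields
`I^γ (ξ^(β-1) E_{α,β}(a ξ^α)) = s^(β+γ-1) E_{α,β+γ}(a s^α)`. Since
`E_α(x) - 1 = x E_{α,1+α}(x)`, taking `β = 1 + α`, `γ = 1 - α` gives
`I^(1-α) (A E_α(a ξ^α) - A) = a A s E_{α,2}(a s^α)`, a power series in `s^α` whose termwise
derivative is `a A E_α(a s^α)`.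
-/

open intervalIntegral Real

noncomputable def mittagLeffler (α x : ℝ) : ℝ := ∑' n : ℕ, x ^ n / Real.Gamma (1 + n * α)

open Filter Set MeasureTheory

theorem Gamma_add_one_le_rpow_mul_Gamma_add {α y : ℝ} (hα0 : 0 < α) (hα1 : α < 1) (hy : 0 < y) :
    Gamma (y + 1) ≤ (y + α) ^ (1 - α) * Gamma (y + α) := by
  have hyα : 0 < y + α := by positivity
  have hG : 0 < Gamma (y + α) := Gamma_pos_of_pos hyα
  have h := Gamma_mul_add_mul_le_rpow_Gamma_mul_rpow_Gamma hyα (by positivity : 0 < y + α + 1)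
    hα0 (sub_pos.2 hα1) (add_sub_cancel α 1)
  rwa [show α * (y + α) + (1 - α) * (y + α + 1) = y + 1 by ring, Gamma_add_one hyα.ne',
    mul_rpow hyα.le hG.le, ← mul_assoc, mul_comm _ ((y + α) ^ (1 - α)), mul_assoc,
    ← rpow_add hG, add_sub_cancel, rpow_one] at h

theorem tendsto_Gamma_add_div_Gamma_atTop {α : ℝ} (hα : 0 < α) :
    Tendsto (fun y => Gamma (y + α) / Gamma y) atTop atTop := by
  rcases lt_or_ge α 1 with hα1 | hα1
  · -- log-convexity gives `Γ(y + α) / Γ(y) ≥ y (y + α)^(α - 1) ≥ (y + α)^α / 2` once `y ≥ α`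
    have hlim : Tendsto (fun y => (y + α) ^ α / 2) atTop atTop :=
      ((tendsto_rpow_atTop hα).comp (tendsto_atTop_add_const_right _ α tendsto_id)).atTop_div_const
        two_pos
    refine tendsto_atTop_mono' _ ?_ hlim
    filter_upwards [eventually_ge_atTop α] with y hy
    have hy0 : 0 < y := hα.trans_le hy
    have hyα : 0 < y + α := by positivity
    have h := Gamma_add_one_le_rpow_mul_Gamma_add hα hα1 hy0
    rw [Gamma_add_one hy0.ne', rpow_sub hyα, rpow_one, div_mul_eq_mul_div,
      le_div_iff₀ (rpow_pos_of_pos hyα α)] at h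
    rw [le_div_iff₀ (Gamma_pos_of_pos hy0)]
    nlinarith [mul_pos (rpow_pos_of_pos hyα α) (Gamma_pos_of_pos hy0)]
  · refine tendsto_atTop_mono' _ ?_ tendsto_id
    filter_upwards [eventually_ge_atTop 2] with y hy
    have hy0 : 0 < y := by linarith
    rw [id, le_div_iff₀ (Gamma_pos_of_pos hy0), ← Gamma_add_one hy0.ne']
    exact Gamma_strictMonoOn_Ici.monotoneOn (by simp; linarith) (by simp; linarith)
      (by linarith)

theorem summable_pow_div_Gamma {α β : ℝ} (hα : 0 < α) (hβ : 0 < β) (x : ℝ) :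
    Summable fun n : ℕ => x ^ n / Gamma (β + n * α) := by
  have hy : Tendsto (fun n : ℕ => β + n * α) atTop atTop :=
    tendsto_atTop_add_const_left _ β (tendsto_natCast_atTop_atTop.atTop_mul_const hα)
  refine summable_of_ratio_norm_eventually_le one_half_lt_one ?_
  filter_upwards [hy.eventually ((tendsto_Gamma_add_div_Gamma_atTop hα).eventually_ge_atTop
    (2 * |x|))] with n hn
  have hG := Gamma_pos_of_pos (by positivity : 0 < β + n * α)
  have hGα := Gamma_pos_of_pos (by positivity : 0 < β + n * α + α)
  rw [le_div_iff₀ hG] at hn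
  rw [Nat.cast_succ, show β + (n + 1) * α = β + n * α + α by ring, norm_div, norm_div, norm_pow,
    norm_pow, Real.norm_of_nonneg hG.le, Real.norm_of_nonneg hGα.le, pow_succ,
    div_le_iff₀ hGα]
  calc ‖x‖ ^ n * ‖x‖ = 1 / 2 * (‖x‖ ^ n / Gamma (β + n * α)) * (2 * |x| * Gamma (β + n * α)) := by
        rw [Real.norm_eq_abs]; field_simp
    _ ≤ _ := by gcongr

theorem integral_rpow_mul_one_sub_rpow {p q : ℝ} (hp : 0 < p) (hq : 0 < q) :
    ∫ x in (0:ℝ)..1, x ^ (p - 1) * (1 - x) ^ (q - 1) = Gamma p * Gamma q / Gamma (p + q) := by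
  have h := Complex.Gamma_mul_Gamma_eq_betaIntegral (s := p) (t := q) (by simpa) (by simpa)
  have hB : Complex.betaIntegral p q = ↑(∫ x in (0:ℝ)..1, x ^ (p - 1) * (1 - x) ^ (q - 1)) := by
    rw [Complex.betaIntegral, ← integral_ofReal]
    refine integral_congr fun x hx => ?_
    rw [uIcc_of_le zero_le_one] at hx
    push_cast [Complex.ofReal_cpow hx.1, Complex.ofReal_cpow (sub_nonneg.2 hx.2)]
    rfl
  rw [hB, ← Complex.ofReal_add, Complex.Gamma_ofReal, Complex.Gamma_ofReal,
    Complex.Gamma_ofReal] at h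
  rw [eq_div_iff (Gamma_pos_of_pos (add_pos hp hq)).ne', mul_comm]
  exact_mod_cast h.symm

theorem integral_sub_rpow_mul_rpow {p q s : ℝ} (hp : 0 < p) (hq : 0 < q) (hs : 0 < s) :
    ∫ ξ in (0:ℝ)..s, (s - ξ) ^ (q - 1) * ξ ^ (p - 1)
      = Gamma p * Gamma q / Gamma (p + q) * s ^ (p + q - 1) := by
  have hscale : ∀ x ∈ uIcc (0:ℝ) 1, (s - s * x) ^ (q - 1) * (s * x) ^ (p - 1)
      = s ^ (p + q - 2) * (x ^ (p - 1) * (1 - x) ^ (q - 1)) := by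
    intro x hx
    rw [uIcc_of_le zero_le_one] at hx
    rw [← mul_one_sub, mul_rpow hs.le (sub_nonneg.2 hx.2), mul_rpow hs.le hx.1,
      show p + q - 2 = (q - 1) + (p - 1) by ring, rpow_add hs]
    ring
  have h := integral_comp_mul_left (fun ξ => (s - ξ) ^ (q - 1) * ξ ^ (p - 1)) (a := 0) (b := 1)
    hs.ne'
  rw [integral_congr hscale, intervalIntegral.integral_const_mul,
    integral_rpow_mul_one_sub_rpow hp hq, mul_zero, mul_one, smul_eq_mul, eq_inv_mul_iff_mul_eq₀ hs.ne'] at h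
  rw [← h, show p + q - 1 = 1 + (p + q - 2) by ring, rpow_add hs, rpow_one]
  ring

theorem intervalIntegrable_sub_rpow_mul_rpow {p q s : ℝ} (hp : 0 < p) (hq : 0 < q) (hs : 0 < s) :
    IntervalIntegrable (fun ξ => (s - ξ) ^ (q - 1) * ξ ^ (p - 1)) volume 0 s := by
  refine intervalIntegrable_of_integral_ne_zero ?_
  rw [integral_sub_rpow_mul_rpow hp hq hs]
  have := Gamma_pos_of_pos hp
  have := Gamma_pos_of_pos hq
  have := Gamma_pos_of_pos (add_pos hp hq)
  positivity

noncomputable def mittagLeffler₂ (α β x : ℝ) : ℝ := ∑' n : ℕ, x ^ n / Gamma (β + n * α)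

noncomputable def riemannLiouvilleIntegral (γ : ℝ) (f : ℝ → ℝ) (s : ℝ) : ℝ :=
  1 / Gamma γ * ∫ ξ in (0:ℝ)..s, (s - ξ) ^ (γ - 1) * f ξ

theorem riemannLiouvilleIntegral_const_mul (γ c : ℝ) (f : ℝ → ℝ) (s : ℝ) :
    riemannLiouvilleIntegral γ (fun ξ => c * f ξ) s = c * riemannLiouvilleIntegral γ f s := by
  simp only [riemannLiouvilleIntegral, mul_left_comm _ c, intervalIntegral.integral_const_mul]

theorem mittagLeffler₂_eq_inv_Gamma_add_mul {α β : ℝ} (hα : 0 < α) (hβ : 0 < β) (x : ℝ) :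
    mittagLeffler₂ α β x = 1 / Gamma β + x * mittagLeffler₂ α (β + α) x := by
  rw [mittagLeffler₂, (summable_pow_div_Gamma hα hβ x).tsum_eq_zero_add, mittagLeffler₂,
    ← tsum_mul_left]
  congr 1
  · simp
  · refine tsum_congr fun n => ?_
    rw [pow_succ', Nat.cast_succ, show β + (n + 1) * α = β + α + n * α by ring, mul_div_assoc]

theorem mittagLeffler_sub_one {α : ℝ} (hα : 0 < α) (x : ℝ) :
    mittagLeffler α x - 1 = x * mittagLeffler₂ α (1 + α) x := by
  rw [show mittagLeffler α x = mittagLeffler₂ α 1 x from rfl,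
    mittagLeffler₂_eq_inv_Gamma_add_mul hα one_pos, Gamma_one, div_one, add_sub_cancel_left]

theorem riemannLiouvilleIntegral_rpow_mul_mittagLeffler₂ {α β γ s : ℝ} (hα : 0 < α)
    (hβ : 0 < β) (hγ : 0 < γ) (a : ℝ) (hs : 0 < s) :
    riemannLiouvilleIntegral γ (fun ξ => ξ ^ (β - 1) * mittagLeffler₂ α β (a * ξ ^ α)) s
      = s ^ (β + γ - 1) * mittagLeffler₂ α (β + γ) (a * s ^ α) := by
  have hβn : ∀ n : ℕ, 0 < β + n * α := fun n => by positivity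
  set F : ℝ → ℕ → ℝ → ℝ := fun b n ξ =>
    b ^ n / Gamma (β + n * α) * ((s - ξ) ^ (γ - 1) * ξ ^ (β + n * α - 1)) with hF
  have hF_int : ∀ b n, IntegrableOn (F b n) (Ioc 0 s) :=
    fun b n => ((intervalIntegrable_sub_rpow_mul_rpow (hβn n) hγ hs).1).const_mul _
  have hF_integral : ∀ b n, ∫ ξ in Ioc 0 s, F b n ξ
      = Gamma γ * s ^ (β + γ - 1) * ((b * s ^ α) ^ n / Gamma (β + γ + n * α)) := by
    intro b n
    rw [MeasureTheory.integral_const_mul, ← intervalIntegral.integral_of_le hs.le,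
      integral_sub_rpow_mul_rpow (hβn n) hγ hs, show β + n * α + γ = β + γ + n * α by ring,
      show β + γ + n * α - 1 = β + γ - 1 + n * α by ring, rpow_add hs, mul_comm (n : ℝ) α,
      rpow_mul_natCast hs.le, mul_pow]
    have := (Gamma_pos_of_pos (hβn n)).ne'
    field_simp
  have hF_norm : ∀ n, EqOn (fun ξ => ‖F a n ξ‖) (F |a| n) (Ioc 0 s) := by
    intro n ξ hξ
    have : 0 ≤ (s - ξ) ^ (γ - 1) * ξ ^ (β + n * α - 1) :=
      mul_nonneg (rpow_nonneg (sub_nonneg.2 hξ.2) _) (rpow_nonneg hξ.1.le _)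
    simp only [hF, norm_mul, norm_div, norm_pow, Real.norm_of_nonneg this,
      Real.norm_of_nonneg (Gamma_pos_of_pos (hβn n)).le, Real.norm_eq_abs]
  have hF_sum : EqOn (fun ξ => (s - ξ) ^ (γ - 1) * (ξ ^ (β - 1) * mittagLeffler₂ α β (a * ξ ^ α)))
      (fun ξ => ∑' n, F a n ξ) (Ioc 0 s) := by
    intro ξ hξ
    simp only [hF, mittagLeffler₂, ← tsum_mul_left]
    refine tsum_congr fun n => ?_
    rw [show β + n * α - 1 = β - 1 + n * α by ring, rpow_add hξ.1, mul_comm (n : ℝ) α,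
      rpow_mul_natCast hξ.1.le, mul_pow]
    ring
  have hsum : Summable fun n => ∫ ξ in Ioc 0 s, ‖F a n ξ‖ := by
    simp_rw [setIntegral_congr_fun measurableSet_Ioc (hF_norm _), hF_integral]
    exact (summable_pow_div_Gamma hα (add_pos hβ hγ) _).mul_left _
  rw [riemannLiouvilleIntegral, intervalIntegral.integral_of_le hs.le,
    setIntegral_congr_fun measurableSet_Ioc hF_sum,
    ← integral_tsum_of_summable_integral_norm (hF_int a) hsum]
  simp_rw [hF_integral, tsum_mul_left]
  rw [← mul_assoc, ← mul_assoc, one_div_mul_cancel (Gamma_pos_of_pos hγ).ne', one_mul]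
  rfl

theorem hasDerivAt_mul_mittagLeffler₂_two {α t : ℝ} (hα : 0 < α) (a : ℝ) (ht : 0 < t) :
    HasDerivAt (fun s => s * mittagLeffler₂ α 2 (a * s ^ α)) (mittagLeffler α (a * t ^ α)) t := by
  set g : ℕ → ℝ → ℝ := fun n s => a ^ n * s ^ (1 + n * α) / Gamma (2 + n * α) with hg
  have hg_eq : ∀ s, 0 < s → ∀ n : ℕ, s * ((a * s ^ α) ^ n / Gamma (2 + n * α)) = g n s := by
    intro s hs n
    simp only [hg]
    rw [rpow_add hs, rpow_one, mul_comm (n : ℝ) α, rpow_mul_natCast hs.le, mul_pow]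
    ring
  have hderiv : ∀ (n : ℕ), ∀ s ∈ Ioo 0 (2 * t),
      HasDerivAt (g n) ((a * s ^ α) ^ n / Gamma (1 + n * α)) s := by
    intro n s hs
    have h1 : 0 < 1 + n * α := by positivity
    refine (((hasDerivAt_rpow_const (p := 1 + n * α) (Or.inl hs.1.ne')).const_mul (a ^ n)).div_const
      (Gamma (2 + n * α))).congr_deriv ?_
    rw [show (2 : ℝ) + n * α = 1 + n * α + 1 by ring, Gamma_add_one h1.ne', add_sub_cancel_left,
      mul_comm (n : ℝ) α, rpow_mul_natCast hs.1.le, mul_pow]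
    have := (Gamma_pos_of_pos h1).ne'
    field_simp
  have hbound : ∀ (n : ℕ), ∀ s ∈ Ioo 0 (2 * t),
      ‖(a * s ^ α) ^ n / Gamma (1 + n * α)‖ ≤ (|a| * (2 * t) ^ α) ^ n / Gamma (1 + n * α) := by
    intro n s ⟨hs0, hs2t⟩
    rw [norm_div, norm_pow, norm_mul, Real.norm_of_nonneg (rpow_nonneg hs0.le α),
      Real.norm_of_nonneg (Gamma_pos_of_pos (by positivity)).le, Real.norm_eq_abs]
    gcongr
  have hmem : t ∈ Ioo 0 (2 * t) := ⟨ht, by linarith⟩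
  have hsum : Summable fun n => g n t :=
    (((summable_pow_div_Gamma hα two_pos (a * t ^ α)).mul_left t).congr (hg_eq t ht))
  have h := hasDerivAt_tsum_of_isPreconnected (summable_pow_div_Gamma hα one_pos _) isOpen_Ioo
    isPreconnected_Ioo hderiv hbound hmem hsum hmem
  refine h.congr_of_eventuallyEq ?_
  filter_upwards [Ioi_mem_nhds ht] with s hs
  rw [mittagLeffler₂, ← tsum_mul_left]
  exact tsum_congr (hg_eq s hs)

theorem riemannLiouvilleIntegral_mittagLeffler_sub {α s : ℝ} (hα0 : 0 < α) (hα1 : α < 1)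
    (a A : ℝ) (hs : 0 < s) :
    riemannLiouvilleIntegral (1 - α) (fun ξ => A * mittagLeffler α (a * ξ ^ α) - A) s
      = a * A * (s * mittagLeffler₂ α 2 (a * s ^ α)) := by
  have h := riemannLiouvilleIntegral_rpow_mul_mittagLeffler₂ hα0 (by positivity : 0 < 1 + α)
    (sub_pos.2 hα1) a hs
  rw [show 1 + α + (1 - α) = 2 by ring, show (2 : ℝ) - 1 = 1 by norm_num, rpow_one,
    add_sub_cancel_left] at h
  rw [← h, ← riemannLiouvilleIntegral_const_mul]
  congr 1
  funext ξ
  rw [← mul_sub_one, mittagLeffler_sub_one hα0]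
  ring

/-- The Jumarie fractional derivative of order `α ∈ (0,1)` (start point `0`) of
`f(s) = A·E_α(a·s^α)` equals `a·A·E_α(a·t^α)`: that is, `A·E_α(a t^α)` solves
the fractional differential equation `D^α y = a y`. -/
theorem jumarie_deriv_mittagLeffler (α a A t : ℝ) (hα0 : 0 < α) (hα1 : α < 1) (ht : 0 < t) :
    HasDerivAt
      (fun s : ℝ => (1 / Real.Gamma (1 - α)) *
        ∫ ξ in (0:ℝ)..s, (s - ξ) ^ (-α) * (A * mittagLeffler α (a * ξ ^ α) - A))
      (a * A * mittagLeffler α (a * t ^ α)) t := by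
  refine ((hasDerivAt_mul_mittagLeffler₂_two hα0 a ht).const_mul (a * A)).congr_of_eventuallyEq ?_
  filter_upwards [Ioi_mem_nhds ht] with s hs
  rw [← riemannLiouvilleIntegral_mittagLeffler_sub hα0 hα1 a A hs, riemannLiouvilleIntegral,
    sub_sub_cancel_left]
end

section
/- Let 0 < α < 1, let a, b, A, B be real numbers, and let t > 0. Set y(s) = A·E_α(a·s^α) + B·E_α(b·s^α), so that y(0) = A + B. Then the function s ↦ (1/Γ(1-α)) · ∫_0^s (s-ξ)^{-α} · (y(ξ) − (A+B)) dξ has derivative a·A·E_α(a·t^α) + b·B·E_α(b·t^α) at the point t. (That is, the Jumarie fractional derivative of order α of A·E_α(a t^α) + B·E_α(b t^α) is a·A·E_α(a t^α) + b·B·E_α(b t^α).) -/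
open intervalIntegral Real

/-!
With `cₙ = A aⁿ + B bⁿ` we have `y(ξ) - y(0) = ∑ₙ cₙ₊₁ ξ^((n+1)α) / Γ((n+1)α + 1)`. By the Beta
integral, `∫₀ˢ (s - ξ)^(-α) ξ^β dξ = Γ(β+1) Γ(1-α) / Γ(β+2-α) · s^(β+1-α)`, so integrating
termwise (dominated convergence) the fractional integral becomes `∑ₙ cₙ₊₁ s^(nα+1) / Γ(nα+2)`.
Differentiating termwise gives `∑ₙ cₙ₊₁ t^(nα) / Γ(nα+1)`, and `cₙ₊₁ = (aA) aⁿ + (bB) bⁿ`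
identifies this with `aA E_α(a t^α) + bB E_α(b t^α)`. All series converge because Gautschi's
inequality `Γ(x) (x+α-1)^α ≤ Γ(x+α)`, a consequence of the log-convexity of `Γ`, makes the
ratio test apply to `∑ Kⁿ / Γ(nα + q)`.
-/

open Filter Set MeasureTheory

theorem Real.Gamma_mul_rpow_le_Gamma_add {α x : ℝ} (hα0 : 0 < α) (hα1 : α < 1) (hx : 1 - α < x) :
    Gamma x * (x + α - 1) ^ α ≤ Gamma (x + α) := by
  have hpos : 0 < x + α - 1 := by linarith
  have hΓ : 0 < Gamma (x + α) := Gamma_pos_of_pos (by linarith)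
  have hrec : Gamma (x + α - 1) = Gamma (x + α) / (x + α - 1) := by
    rw [eq_div_iff hpos.ne', mul_comm, ← Gamma_add_one hpos.ne', sub_add_cancel]
  have hconv := Gamma_mul_add_mul_le_rpow_Gamma_mul_rpow_Gamma hpos (by linarith : 0 < x + α)
    hα0 (sub_pos.2 hα1) (add_sub_cancel α 1)
  rw [show α * (x + α - 1) + (1 - α) * (x + α) = x by ring, hrec,
    div_rpow hΓ.le hpos.le, div_mul_eq_mul_div, ← rpow_add hΓ, add_sub_cancel, rpow_one] at hconv
  exact (le_div_iff₀ (rpow_pos_of_pos hpos α)).1 hconv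

theorem summable_pow_div_Gamma_mul_add {α q : ℝ} (hα0 : 0 < α) (hα1 : α < 1) (hq : 0 < q)
    (c : ℝ) : Summable fun n : ℕ => c ^ n / Gamma (n * α + q) := by
  have hx : Tendsto (fun n : ℕ => (n : ℝ) * α + q) atTop atTop :=
    tendsto_atTop_add_const_right _ q (tendsto_natCast_atTop_atTop.atTop_mul_const hα0)
  have hgrowth : Tendsto (fun n : ℕ => ((n : ℝ) * α + q + α - 1) ^ α) atTop atTop :=
    (tendsto_rpow_atTop hα0).comp
      (tendsto_atTop_add_const_right _ _ (tendsto_atTop_add_const_right _ _ hx))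
  refine summable_of_ratio_norm_eventually_le (r := 1 / 2) (by norm_num) ?_
  filter_upwards [hx.eventually_gt_atTop (1 - α), hgrowth.eventually_ge_atTop (2 * |c|)]
    with n hn hn'
  have hΓ : 0 < Gamma (n * α + q) := Gamma_pos_of_pos (by positivity)
  have hgautschi := Real.Gamma_mul_rpow_le_Gamma_add hα0 hα1 hn
  have hΓ' : 0 < Gamma (n * α + q + α) := Gamma_pos_of_pos (by positivity)
  rw [show ((n + 1 : ℕ) : ℝ) * α + q = n * α + q + α by push_cast; ring, norm_div, norm_div,
    norm_pow, norm_pow, norm_of_nonneg hΓ.le, norm_of_nonneg hΓ'.le, pow_succ,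
    div_le_iff₀ hΓ', Real.norm_eq_abs]
  calc |c| ^ n * |c| = |c| ^ n / Gamma (n * α + q) * (|c| * Gamma (n * α + q)) := by
        field_simp
    _ ≤ |c| ^ n / Gamma (n * α + q) * (1 / 2 * Gamma (n * α + q + α)) := by
        have := mul_le_mul_of_nonneg_left hn' hΓ.le
        gcongr ?_ * ?_
        linarith
    _ = 1 / 2 * (|c| ^ n / Gamma (n * α + q)) * Gamma (n * α + q + α) := by ring

theorem integral_rpow_mul_sub_rpow {p q a : ℝ} (hp : 0 < p) (hq : 0 < q) (ha : 0 < a) :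
    ∫ x in 0..a, x ^ (p - 1) * (a - x) ^ (q - 1) =
      a ^ (p + q - 1) * (Gamma p * Gamma q / Gamma (p + q)) := by
  have hcomplex := Complex.betaIntegral_scaled p q ha
  rw [Complex.betaIntegral_eq_Gamma_mul_div _ _ (by simpa) (by simpa)] at hcomplex
  apply Complex.ofReal_injective
  push_cast [← intervalIntegral.integral_ofReal, Complex.ofReal_cpow ha.le, ← Complex.Gamma_ofReal]
  rw [← hcomplex]
  refine intervalIntegral.integral_congr fun x hx => ?_
  rw [uIcc_of_le ha.le] at hx
  simp only [Complex.ofReal_cpow hx.1, Complex.ofReal_cpow (sub_nonneg.2 hx.2)]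
  push_cast
  ring

theorem integral_sub_rpow_neg_mul_rpow {α β s : ℝ} (hα : α < 1) (hβ : -1 < β) (hs : 0 < s) :
    ∫ ξ in 0..s, (s - ξ) ^ (-α) * ξ ^ β =
      s ^ (β + 1 - α) * (Gamma (β + 1) * Gamma (1 - α) / Gamma (β + 2 - α)) := by
  have hbeta := integral_rpow_mul_sub_rpow (by linarith : 0 < β + 1) (sub_pos.2 hα) hs
  rw [add_sub_cancel_right, sub_sub_cancel_left, show β + 1 + (1 - α) - 1 = β + 1 - α by ring,
    show β + 1 + (1 - α) = β + 2 - α by ring] at hbeta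
  simp_rw [mul_comm ((s - _) ^ (-α))]
  exact hbeta

section MittagLefflerSeries

variable {α : ℝ} {c : ℕ → ℝ}

noncomputable def mittagLefflerSeries (α : ℝ) (c : ℕ → ℝ) (x : ℝ) : ℝ :=
  ∑' n : ℕ, c n * x ^ n / Gamma (n * α + 1)

theorem summable_mul_pow_div_Gamma_of_abs_le_geom (hα0 : 0 < α) (hα1 : α < 1) {C K q : ℝ}
    (hc : ∀ n, |c n| ≤ C * K ^ n) (hq : 0 < q) (x : ℝ) :
    Summable fun n : ℕ => c n * x ^ n / Gamma (n * α + q) := by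
  refine .of_norm_bounded ((summable_pow_div_Gamma_mul_add hα0 hα1 hq (K * |x|)).mul_left C)
    fun n => ?_
  have hΓ : 0 < Gamma (n * α + q) := Gamma_pos_of_pos (by positivity)
  rw [norm_div, norm_mul, norm_pow, norm_of_nonneg hΓ.le, Real.norm_eq_abs, Real.norm_eq_abs,
    mul_pow, ← mul_div_assoc, ← mul_assoc]
  gcongr
  exact hc n

theorem hasSum_mittagLefflerSeries_sub (hα0 : 0 < α) (hα1 : α < 1) {C K : ℝ}
    (hc : ∀ n, |c n| ≤ C * K ^ n) (x : ℝ) :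
    HasSum (fun n : ℕ => c (n + 1) * x ^ (n + 1) / Gamma ((n + 1 : ℕ) * α + 1))
      (mittagLefflerSeries α c x - c 0) := by
  have h := (summable_mul_pow_div_Gamma_of_abs_le_geom hα0 hα1 hc one_pos x).hasSum
  rw [← hasSum_nat_add_iff' 1] at h
  simpa [mittagLefflerSeries] using h

theorem integral_sub_rpow_neg_mul_term (hα0 : 0 < α) (hα1 : α < 1) {s : ℝ} (hs : 0 < s)
    (k : ℝ) (m : ℕ) :
    ∫ ξ in 0..s, (s - ξ) ^ (-α) * (k * (ξ ^ α) ^ (m + 1) / Gamma ((m + 1 : ℕ) * α + 1)) =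
      Gamma (1 - α) * (k * s ^ (m * α + 1) / Gamma (m * α + 2)) := by
  have hβ : 0 < ((m + 1 : ℕ) : ℝ) * α := by positivity
  rw [integral_congr (g := fun ξ => k / Gamma ((m + 1 : ℕ) * α + 1) *
      ((s - ξ) ^ (-α) * ξ ^ (((m + 1 : ℕ) : ℝ) * α))) fun ξ hξ => ?_]
  · rw [intervalIntegral.integral_const_mul, integral_sub_rpow_neg_mul_rpow hα1 (by linarith) hs]
    have hΓ : Gamma ((m + 1 : ℕ) * α + 1) ≠ 0 := (Gamma_pos_of_pos (by linarith)).ne'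
    push_cast at hΓ ⊢
    rw [show ((m : ℝ) + 1) * α + 1 - α = m * α + 1 by ring,
      show ((m : ℝ) + 1) * α + 2 - α = m * α + 2 by ring]
    field_simp
  · rw [uIcc_of_le hs.le] at hξ
    simp only [mul_comm _ α, rpow_mul_natCast hξ.1]
    ring

theorem jumarie_integral_mittagLefflerSeries (hα0 : 0 < α) (hα1 : α < 1) {C K s : ℝ}
    (hc : ∀ n, |c n| ≤ C * K ^ n) (hs : 0 < s) :
    1 / Gamma (1 - α) * ∫ ξ in 0..s, (s - ξ) ^ (-α) * (mittagLefflerSeries α c (ξ ^ α) - c 0) =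
      ∑' n : ℕ, c (n + 1) * s ^ (n * α + 1) / Gamma (n * α + 2) := by
  have hkernel : IntervalIntegrable (fun ξ => (s - ξ) ^ (-α)) volume 0 s := by
    simpa using ((intervalIntegrable_rpow' (a := 0) (b := s) (by linarith : -1 < -α)).comp_sub_left
      s).symm
  have hmajorant := (summable_nat_add_iff 1).2
    (summable_mul_pow_div_Gamma_of_abs_le_geom hα0 hα1 (c := (|c ·|)) (by simpa using hc) one_pos
      (s ^ α))
  have hsum := intervalIntegral.hasSum_integral_of_dominated_convergence (μ := volume) (a := 0)
    (b := s)
    (F := fun n ξ => (s - ξ) ^ (-α) * (c (n + 1) * (ξ ^ α) ^ (n + 1) / Gamma ((n + 1 : ℕ) * α + 1)))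
    (fun n ξ => (s - ξ) ^ (-α) * (|c (n + 1)| * (s ^ α) ^ (n + 1) / Gamma ((n + 1 : ℕ) * α + 1)))
    (fun n => (by fun_prop : Measurable _).aestronglyMeasurable) ?_
    (ae_of_all _ fun ξ _ => hmajorant.mul_left _) ?_
    (ae_of_all _ fun ξ _ => (hasSum_mittagLefflerSeries_sub hα0 hα1 hc (ξ ^ α)).mul_left _)
  · simp only [integral_sub_rpow_neg_mul_term hα0 hα1 hs] at hsum
    have hΓ : Gamma (1 - α) ≠ 0 := (Gamma_pos_of_pos (by linarith)).ne'
    rw [← hsum.tsum_eq, tsum_mul_left]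
    field_simp
  · refine fun n => ae_of_all _ fun ξ hξ => ?_
    rw [uIoc_of_le hs.le] at hξ
    have hΓ : 0 < Gamma ((n + 1 : ℕ) * α + 1) := Gamma_pos_of_pos (by positivity)
    have hkernel_nonneg : 0 ≤ (s - ξ) ^ (-α) := rpow_nonneg (sub_nonneg.2 hξ.2) _
    rw [norm_mul, norm_of_nonneg hkernel_nonneg, norm_div, norm_mul,
      norm_pow, norm_of_nonneg hΓ.le, norm_of_nonneg (rpow_nonneg hξ.1.le _), Real.norm_eq_abs]
    gcongr
    exacts [rpow_nonneg hξ.1.le _, hξ.1.le, hξ.2]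
  · simp_rw [tsum_mul_left]
    exact hkernel.mul_const _

theorem hasDerivAt_tsum_mul_rpow_div_Gamma (hα0 : 0 < α) (hα1 : α < 1) {C K t : ℝ}
    (hc : ∀ n, |c n| ≤ C * K ^ n) (ht : 0 < t) :
    HasDerivAt (fun s => ∑' n : ℕ, c n * s ^ (n * α + 1) / Gamma (n * α + 2))
      (mittagLefflerSeries α c (t ^ α)) t := by
  have hmem : t ∈ Ioo 0 (t + 1) := ⟨ht, lt_add_one t⟩
  refine hasDerivAt_tsum_of_isPreconnected
    (g' := fun n y => c n * (y ^ α) ^ n / Gamma (n * α + 1))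
    (summable_mul_pow_div_Gamma_of_abs_le_geom hα0 hα1 (c := (|c ·|)) (by simpa using hc) one_pos
      ((t + 1) ^ α))
    isOpen_Ioo isPreconnected_Ioo (fun n y hy => ?_) (fun n y hy => ?_) hmem ?_ hmem
  · have hpos : 0 < (n : ℝ) * α + 1 := by positivity
    refine (((hasDerivAt_rpow_const (p := n * α + 1) (Or.inl hy.1.ne')).const_mul (c n)).div_const
      (Gamma (n * α + 2))).congr_deriv ?_
    rw [show (n : ℝ) * α + 2 = n * α + 1 + 1 by ring, Gamma_add_one hpos.ne', add_sub_cancel_right,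
      mul_comm (n : ℝ) α, rpow_mul_natCast hy.1.le]
    field_simp
  · have hΓ : 0 < Gamma (n * α + 1) := Gamma_pos_of_pos (by positivity)
    rw [norm_div, norm_mul, norm_pow, norm_of_nonneg hΓ.le, norm_of_nonneg (rpow_nonneg hy.1.le _),
      Real.norm_eq_abs]
    gcongr
    exacts [rpow_nonneg hy.1.le _, hy.1.le, hy.2.le]
  · refine ((summable_mul_pow_div_Gamma_of_abs_le_geom hα0 hα1 hc two_pos (t ^ α)).mul_left t).congr
      fun n => ?_
    rw [rpow_add ht, rpow_one, mul_comm (n : ℝ) α, rpow_mul_natCast ht.le]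
    ring

theorem hasDerivAt_jumarie_mittagLefflerSeries (hα0 : 0 < α) (hα1 : α < 1) {C K t : ℝ}
    (hc : ∀ n, |c n| ≤ C * K ^ n) (ht : 0 < t) :
    HasDerivAt (fun s => 1 / Gamma (1 - α) *
        ∫ ξ in 0..s, (s - ξ) ^ (-α) * (mittagLefflerSeries α c (ξ ^ α) - c 0))
      (mittagLefflerSeries α (fun n => c (n + 1)) (t ^ α)) t := by
  have hshift : ∀ n, |c (n + 1)| ≤ C * K * K ^ n := fun n => (hc (n + 1)).trans_eq (by ring)
  refine (hasDerivAt_tsum_mul_rpow_div_Gamma hα0 hα1 hshift ht).congr_of_eventuallyEq ?_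
  filter_upwards [Ioi_mem_nhds ht] with s hs
  exact jumarie_integral_mittagLefflerSeries hα0 hα1 hc hs

theorem mul_mittagLeffler_add_mul_mittagLeffler (hα0 : 0 < α) (hα1 : α < 1) (A a B b x : ℝ) :
    A * mittagLeffler α (a * x) + B * mittagLeffler α (b * x) =
      mittagLefflerSeries α (fun n => A * a ^ n + B * b ^ n) x := by
  have hsummable (y : ℝ) : Summable fun n : ℕ => y ^ n / Gamma (1 + n * α) :=
    (summable_pow_div_Gamma_mul_add hα0 hα1 one_pos y).congr fun n => by rw [add_comm]
  rw [mittagLeffler, mittagLeffler, ← tsum_mul_left, ← tsum_mul_left,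
    ← ((hsummable _).mul_left A).tsum_add ((hsummable _).mul_left B)]
  refine tsum_congr fun n => ?_
  rw [add_comm 1]
  ring

end MittagLefflerSeries

theorem abs_mul_pow_add_mul_pow_le (A a B b : ℝ) (n : ℕ) :
    |A * a ^ n + B * b ^ n| ≤ (|A| + |B|) * max |a| |b| ^ n := by
  have ha : |a| ^ n ≤ max |a| |b| ^ n := pow_le_pow_left₀ (abs_nonneg a) (le_max_left _ _) n
  have hb : |b| ^ n ≤ max |a| |b| ^ n := pow_le_pow_left₀ (abs_nonneg b) (le_max_right _ _) n
  calc |A * a ^ n + B * b ^ n| ≤ |A| * |a| ^ n + |B| * |b| ^ n := by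
        simpa only [abs_mul, abs_pow] using abs_add_le (A * a ^ n) (B * b ^ n)
    _ ≤ (|A| + |B|) * max |a| |b| ^ n := by
        nlinarith [abs_nonneg A, abs_nonneg B]

/-- The Jumarie fractional derivative of order `α ∈ (0,1)` (start point `0`) of
`y(s) = A·E_α(a·s^α) + B·E_α(b·s^α)` (with `y(0) = A + B`) equals
`a·A·E_α(a·t^α) + b·B·E_α(b·t^α)`. -/
theorem jumarie_deriv_sum_mittagLeffler (α a b A B t : ℝ)
    (hα0 : 0 < α) (hα1 : α < 1) (ht : 0 < t) :
    HasDerivAt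
      (fun s : ℝ => (1 / Real.Gamma (1 - α)) *
        ∫ ξ in (0:ℝ)..s, (s - ξ) ^ (-α) *
          ((A * mittagLeffler α (a * ξ ^ α) + B * mittagLeffler α (b * ξ ^ α)) - (A + B)))
      (a * A * mittagLeffler α (a * t ^ α) + b * B * mittagLeffler α (b * t ^ α)) t := by
  have key := hasDerivAt_jumarie_mittagLefflerSeries hα0 hα1 (abs_mul_pow_add_mul_pow_le A a B b) ht
  have hshift : (fun n : ℕ => A * a ^ (n + 1) + B * b ^ (n + 1)) =
      fun n => a * A * a ^ n + b * B * b ^ n := by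
    ext n
    ring
  rw [hshift, ← mul_mittagLeffler_add_mul_mittagLeffler hα0 hα1] at key
  simpa only [← mul_mittagLeffler_add_mul_mittagLeffler hα0 hα1, pow_zero, mul_one] using key
end
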